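/- arXiv:2403.15719 — 5 statements merged into one kernel-verified Lean document; each statement's English description precedes it below -/
import Mathlib

section
/- Let H be a positive definite 2n×2n complex matrix with Hᵀ𝒥_nH = 𝒥_n, and let S be the unique positive semidefinite square root of H (so S is positive definite and S² = H). Then Sᵀ𝒥_nS = 𝒥_n, i.e. S ∈ Sp(2n,ℂ). -/
/-!
For a unitary `U` and invertible `A`, the condition `Aᵀ U A = U` says that `A` is a fixed point
of `X ↦ Uᴴ (X⁻¹)ᵀ U`. This map is multiplicative and sends positive semidefinite matrices to
positive semidefinite ones, so it sends the positive square root `S` of a fixed point `H` to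
another positive square root of `H`, which by uniqueness is `S` itself.
-/

open Matrix
open scoped ComplexOrder

/-- The matrix `𝒥_n = [[0, I_n], [-I_n, 0]]` of the paper. -/
def Jmat (n : ℕ) : Matrix (Fin n ⊕ Fin n) (Fin n ⊕ Fin n) ℂ :=
  Matrix.fromBlocks 0 1 (-1) 0

namespace Matrix

variable {n R 𝕜 : Type*} [Fintype n] [DecidableEq n]

theorem isUnit_det_of_transpose_mul_mul_self_eq [CommRing R] {J A : Matrix n n R}
    (hJ : IsUnit J.det) (h : Aᵀ * J * A = J) : IsUnit A.det := by
  have hdet : A.det * A.det * J.det = 1 * J.det := by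
    simpa only [det_mul, det_transpose, mul_right_comm _ J.det, one_mul] using congrArg det h
  exact .of_mul_eq_one _ (hJ.mul_left_injective hdet)

theorem transpose_mul_mul_self_eq_iff [CommRing R] [StarRing R] {U A : Matrix n n R}
    (hU : U ∈ unitaryGroup n R) (hA : IsUnit A.det) :
    Aᵀ * U * A = U ↔ star U * (A⁻¹)ᵀ * U = A := by
  have hAA : Aᵀ * (A⁻¹)ᵀ = 1 := by
    rw [← transpose_mul, nonsing_inv_mul _ hA, transpose_one]
  have hAA' : (A⁻¹)ᵀ * Aᵀ = 1 := by
    rw [← transpose_mul, mul_nonsing_inv _ hA, transpose_one]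
  constructor
  · intro h
    calc star U * (A⁻¹)ᵀ * U = star U * (A⁻¹)ᵀ * (Aᵀ * U * A) := by rw [h]
      _ = star U * ((A⁻¹)ᵀ * Aᵀ) * U * A := by simp only [Matrix.mul_assoc]
      _ = A := by rw [hAA', Matrix.mul_one, mem_unitaryGroup_iff'.mp hU, Matrix.one_mul]
  · intro h
    calc Aᵀ * U * A = Aᵀ * U * (star U * (A⁻¹)ᵀ * U) := by rw [h]
      _ = Aᵀ * (U * star U) * (A⁻¹)ᵀ * U := by simp only [Matrix.mul_assoc]
      _ = U := by rw [mem_unitaryGroup_iff.mp hU, Matrix.mul_one, hAA, Matrix.one_mul]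

open scoped MatrixOrder in
theorem PosSemidef.eq_of_mul_self_eq [RCLike 𝕜] {A B : Matrix n n 𝕜} (hA : A.PosSemidef)
    (hB : B.PosSemidef) (h : A * A = B * B) : A = B :=
  (CFC.mul_self_eq_mul_self_iff A B hA.nonneg hB.nonneg).mp h

theorem PosSemidef.transpose_mul_mul_self_eq_of_mul_self [RCLike 𝕜] {U S : Matrix n n 𝕜}
    (hU : U ∈ unitaryGroup n 𝕜) (hS : S.PosSemidef) (h : (S * S)ᵀ * U * (S * S) = U) :
    Sᵀ * U * S = U := by
  have hSS : IsUnit (S * S).det :=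
    isUnit_det_of_transpose_mul_mul_self_eq (UnitaryGroup.det_isUnit ⟨U, hU⟩) h
  have hS' : IsUnit S.det := isUnit_of_mul_isUnit_left (det_mul S S ▸ hSS)
  rw [transpose_mul_mul_self_eq_iff hU hSS] at h
  rw [transpose_mul_mul_self_eq_iff hU hS']
  refine (hS.inv.transpose.conjTranspose_mul_mul_same U).eq_of_mul_self_eq hS ?_
  calc star U * (S⁻¹)ᵀ * U * (star U * (S⁻¹)ᵀ * U)
      = star U * (S⁻¹)ᵀ * (U * star U) * (S⁻¹)ᵀ * U := by simp only [Matrix.mul_assoc]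
    _ = star U * ((S * S)⁻¹)ᵀ * U := by
        rw [mem_unitaryGroup_iff.mp hU, Matrix.mul_one, Matrix.mul_inv_rev, transpose_mul,
          Matrix.mul_assoc (star U)]
    _ = S * S := h

end Matrix

theorem Jmat_mem_unitaryGroup (n : ℕ) : Jmat n ∈ unitaryGroup (Fin n ⊕ Fin n) ℂ := by
  rw [mem_unitaryGroup_iff, star_eq_conjTranspose, Jmat, fromBlocks_conjTranspose,
    fromBlocks_multiply, ← fromBlocks_one]
  simp

theorem sqrt_of_posDef_symplectic_is_symplectic_general
    (n : ℕ) (H S : Matrix (Fin n ⊕ Fin n) (Fin n ⊕ Fin n) ℂ)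
    (hsp : Hᵀ * Jmat n * H = Jmat n)
    (hS : S.PosSemidef) (hSsq : S * S = H) :
    Sᵀ * Jmat n * S = Jmat n :=
  hS.transpose_mul_mul_self_eq_of_mul_self (Jmat_mem_unitaryGroup n) (hSsq ▸ hsp)

/-- the (unique) positive semidefinite square root of a positive
definite symplectic matrix is again symplectic. -/
theorem sqrt_of_posDef_symplectic_is_symplectic
    (n : ℕ) (H S : Matrix (Fin n ⊕ Fin n) (Fin n ⊕ Fin n) ℂ)
    (hH : H.PosDef) (hsp : Hᵀ * Jmat n * H = Jmat n)
    (hS : S.PosSemidef) (hSsq : S * S = H) :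
    Sᵀ * Jmat n * S = Jmat n :=
  sqrt_of_posDef_symplectic_is_symplectic_general n H S hsp hS hSsq
end

section
/- Let H₁, H₂ be positive definite 2n×2n complex matrices and g an invertible 2n×2n complex matrix such that H₁ = g·H₂·g*, and suppose in addition that H₁, H₂ and g all lie in Sp(2n,ℂ) (i.e. Mᵀ𝒥_nM = 𝒥_n for M = H₁, H₂, g). Let S₁, S₂ be the unique positive semidefinite square roots of H₁, H₂. Then S₁⁻¹·g·S₂ lies in Sp(2n,ℂ) ∩ U(2n), i.e. it satisfies both (S₁⁻¹gS₂)ᵀ𝒥_n(S₁⁻¹gS₂) = 𝒥_n and (S₁⁻¹gS₂)*(S₁⁻¹gS₂) = I. -/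
open Matrix
open scoped ComplexOrder

/-! If `H` is symplectic then `H⁻¹ = Jᴴ Hᵀ J`. For `S = √H`, both `S⁻¹` and `Jᴴ Sᵀ J` are positive
semidefinite square roots of `H⁻¹`, so they coincide, which says that `S` is symplectic. Hence
`S₁⁻¹ g S₂` is a product of symplectic matrices; it is unitary because
`(S₁⁻¹ g S₂)(S₁⁻¹ g S₂)ᴴ = S₁⁻¹ (g H₂ gᴴ) S₁⁻¹ = S₁⁻¹ H₁ S₁⁻¹ = 1`. -/

namespace Matrix

variable {𝕜 : Type*} [RCLike 𝕜] {m : Type*} [Fintype m] [DecidableEq m]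

theorem conjTranspose_J (l : Type*) [DecidableEq l] : (J l 𝕜)ᴴ = -J l 𝕜 := by
  simp [J, fromBlocks_conjTranspose, fromBlocks_neg]

open scoped MatrixOrder in
theorem PosSemidef.eq_of_mul_self_eq_mul_self {A B : Matrix m m 𝕜} (hA : A.PosSemidef)
    (hB : B.PosSemidef) (h : A * A = B * B) : A = B :=
  (CFC.mul_self_eq_mul_self_iff A B hA.nonneg hB.nonneg).1 h

theorem IsHermitian.inv_mul_mul_mem_unitaryGroup {S₁ S₂ g : Matrix m m 𝕜}
    (hS₁ : S₁.IsHermitian) (hS₁u : IsUnit S₁) (hS₂ : S₂.IsHermitian)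
    (h : S₁ * S₁ = g * (S₂ * S₂) * gᴴ) : S₁⁻¹ * g * S₂ ∈ unitaryGroup m 𝕜 := by
  have hdet : IsUnit S₁.det := (isUnit_iff_isUnit_det S₁).1 hS₁u
  rw [mem_unitaryGroup_iff, star_eq_conjTranspose]
  calc S₁⁻¹ * g * S₂ * (S₁⁻¹ * g * S₂)ᴴ = S₁⁻¹ * (g * (S₂ * S₂) * gᴴ) * S₁⁻¹ := by
        simp only [conjTranspose_mul, conjTranspose_nonsing_inv, hS₁.eq, hS₂.eq,
          Matrix.mul_assoc]
    _ = 1 := by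
        rw [← h, ← Matrix.mul_assoc, nonsing_inv_mul _ hdet, Matrix.one_mul,
          mul_nonsing_inv _ hdet]

end Matrix

namespace SymplecticGroup

variable {l : Type*} [DecidableEq l] [Fintype l]

theorem nonsing_inv_mem {R : Type*} [CommRing R] {A : Matrix (l ⊕ l) (l ⊕ l) R}
    (hA : A ∈ symplecticGroup l R) : A⁻¹ ∈ symplecticGroup l R := by
  rw [inv_eq_symplectic_inv A hA]
  exact mul_mem (mul_mem (neg_mem (J_mem l R)) (transpose_mem hA)) (J_mem l R)

theorem _root_.Matrix.PosSemidef.mem_symplecticGroup_of_mul_self {𝕜 : Type*} [RCLike 𝕜]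
    {S : Matrix (l ⊕ l) (l ⊕ l) 𝕜} (hS : S.PosSemidef) (hSS : S * S ∈ symplecticGroup l 𝕜) :
    S ∈ symplecticGroup l 𝕜 := by
  have hSdet : IsUnit S.det :=
    isUnit_of_mul_isUnit_left (by simpa only [det_mul] using symplectic_det hSS)
  have hK : (-J l 𝕜 * Sᵀ * J l 𝕜).PosSemidef := by
    rw [← conjTranspose_J]
    exact hS.transpose.conjTranspose_mul_mul_same _
  have hKK : (-J l 𝕜 * Sᵀ * J l 𝕜) * (-J l 𝕜 * Sᵀ * J l 𝕜) = S⁻¹ * S⁻¹ :=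
    calc (-J l 𝕜 * Sᵀ * J l 𝕜) * (-J l 𝕜 * Sᵀ * J l 𝕜)
        = -J l 𝕜 * Sᵀ * -(J l 𝕜 * J l 𝕜) * Sᵀ * J l 𝕜 := by noncomm_ring
      _ = -J l 𝕜 * (S * S)ᵀ * J l 𝕜 := by
        rw [J_squared, neg_neg, transpose_mul]
        noncomm_ring
      _ = S⁻¹ * S⁻¹ := by rw [← inv_eq_symplectic_inv _ hSS, Matrix.mul_inv_rev]
  have hKinv : -J l 𝕜 * Sᵀ * J l 𝕜 = S⁻¹ := hK.eq_of_mul_self_eq_mul_self hS.inv hKK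
  rw [mem_iff']
  calc Sᵀ * J l 𝕜 * S = -(J l 𝕜 * J l 𝕜) * Sᵀ * J l 𝕜 * S := by
        rw [J_squared, neg_neg, Matrix.one_mul]
    _ = J l 𝕜 * (-J l 𝕜 * Sᵀ * J l 𝕜) * S := by noncomm_ring
    _ = J l 𝕜 := by rw [hKinv, Matrix.mul_assoc, nonsing_inv_mul _ hSdet, Matrix.mul_one]

end SymplecticGroup

theorem Jmat_eq_neg_J (n : ℕ) : Jmat n = -J (Fin n) ℂ := by
  simp [Jmat, J, fromBlocks_neg]

theorem mem_symplecticGroup_iff_Jmat {n : ℕ} {A : Matrix (Fin n ⊕ Fin n) (Fin n ⊕ Fin n) ℂ} :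
    A ∈ symplecticGroup (Fin n) ℂ ↔ Aᵀ * Jmat n * A = Jmat n := by
  simp [SymplecticGroup.mem_iff', Jmat_eq_neg_J]

theorem transition_mem_compact_symplectic_general
    (n : ℕ) (H₁ H₂ g S₁ S₂ : Matrix (Fin n ⊕ Fin n) (Fin n ⊕ Fin n) ℂ)
    (hrel : H₁ = g * H₂ * gᴴ)
    (hH₁sp : H₁ᵀ * Jmat n * H₁ = Jmat n)
    (hH₂sp : H₂ᵀ * Jmat n * H₂ = Jmat n)
    (hgsp : gᵀ * Jmat n * g = Jmat n)
    (hS₁ : S₁.PosSemidef) (hS₁sq : S₁ * S₁ = H₁)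
    (hS₂ : S₂.PosSemidef) (hS₂sq : S₂ * S₂ = H₂) :
    (S₁⁻¹ * g * S₂)ᵀ * Jmat n * (S₁⁻¹ * g * S₂) = Jmat n ∧
      (S₁⁻¹ * g * S₂)ᴴ * (S₁⁻¹ * g * S₂) = 1 := by
  have hS₁sp : S₁ ∈ symplecticGroup (Fin n) ℂ :=
    hS₁.mem_symplecticGroup_of_mul_self (mem_symplecticGroup_iff_Jmat.2 (hS₁sq ▸ hH₁sp))
  have hS₂sp : S₂ ∈ symplecticGroup (Fin n) ℂ :=
    hS₂.mem_symplecticGroup_of_mul_self (mem_symplecticGroup_iff_Jmat.2 (hS₂sq ▸ hH₂sp))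
  have hS₁u : IsUnit S₁ := (isUnit_iff_isUnit_det S₁).2 (SymplecticGroup.symplectic_det hS₁sp)
  constructor
  · exact mem_symplecticGroup_iff_Jmat.1 <| mul_mem (mul_mem
      (SymplecticGroup.nonsing_inv_mem hS₁sp) (mem_symplecticGroup_iff_Jmat.2 hgsp)) hS₂sp
  · exact mem_unitaryGroup_iff'.1 <|
      hS₁.1.inv_mul_mul_mem_unitaryGroup hS₁u hS₂.1 (by rw [hS₁sq, hS₂sq, ← hrel])

/-- under the cocycle relation `H₁ = g H₂ g*` with `H₁, H₂, g` in
`Sp(2n,ℂ)` and `H₁, H₂` positive definite, the matrix `S₁⁻¹ g S₂` built from the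
positive semidefinite square roots `S₁, S₂` lies in `Sp(2n) = Sp(2n,ℂ) ∩ U(2n)`. -/
theorem transition_mem_compact_symplectic
    (n : ℕ) (H₁ H₂ g S₁ S₂ : Matrix (Fin n ⊕ Fin n) (Fin n ⊕ Fin n) ℂ)
    (hH₁ : H₁.PosDef) (hH₂ : H₂.PosDef)
    (hg : IsUnit g)
    (hrel : H₁ = g * H₂ * gᴴ)
    (hH₁sp : H₁ᵀ * Jmat n * H₁ = Jmat n)
    (hH₂sp : H₂ᵀ * Jmat n * H₂ = Jmat n)
    (hgsp : gᵀ * Jmat n * g = Jmat n)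
    (hS₁ : S₁.PosSemidef) (hS₁sq : S₁ * S₁ = H₁)
    (hS₂ : S₂.PosSemidef) (hS₂sq : S₂ * S₂ = H₂) :
    (S₁⁻¹ * g * S₂)ᵀ * Jmat n * (S₁⁻¹ * g * S₂) = Jmat n ∧
      (S₁⁻¹ * g * S₂)ᴴ * (S₁⁻¹ * g * S₂) = 1 :=
  transition_mem_compact_symplectic_general n H₁ H₂ g S₁ S₂ hrel hH₁sp hH₂sp hgsp hS₁ hS₁sq hS₂
    hS₂sq
end

section
/- Let H₁, H₂ be invertible Hermitian complex matrices of sizes m×m and n×n, and let Ω₁, Ω₂ be invertible complex matrices of sizes m×m and n×n satisfying the compatibility conditions Ω₁ᵀ = conj(H₁ᵀ·Ω₁⁻¹·H₁) and Ω₂ᵀ = conj(H₂ᵀ·Ω₂⁻¹·H₂). Then the Kronecker products H = H₁ ⊗ H₂ and Ω = Ω₁ ⊗ Ω₂ satisfy Ωᵀ = conj(Hᵀ·Ω⁻¹·H). -/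
open Matrix Kronecker

/-- the compatibility condition `Ωᵀ = conj(Hᵀ Ω⁻¹ H)` between a
Hermitian metric and a nondegenerate pairing is preserved by Kronecker products. -/
theorem kronecker_compat
    (m n : ℕ)
    (H₁ Ω₁ : Matrix (Fin m) (Fin m) ℂ) (H₂ Ω₂ : Matrix (Fin n) (Fin n) ℂ)
    (hH₁ : IsUnit H₁) (hH₁h : H₁.IsHermitian)
    (hH₂ : IsUnit H₂) (hH₂h : H₂.IsHermitian)
    (hΩ₁ : IsUnit Ω₁) (hΩ₂ : IsUnit Ω₂)
    (hc₁ : Ω₁ᵀ = (H₁ᵀ * Ω₁⁻¹ * H₁).map (starRingEnd ℂ))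
    (hc₂ : Ω₂ᵀ = (H₂ᵀ * Ω₂⁻¹ * H₂).map (starRingEnd ℂ)) :
    (Ω₁ ⊗ₖ Ω₂)ᵀ =
      ((H₁ ⊗ₖ H₂)ᵀ * (Ω₁ ⊗ₖ Ω₂)⁻¹ * (H₁ ⊗ₖ H₂)).map (starRingEnd ℂ) := by
  have key : ∀ {p q : ℕ} (A : Matrix (Fin p) (Fin p) ℂ) (C : Matrix (Fin q) (Fin q) ℂ),
      (A ⊗ₖ C).map (starRingEnd ℂ) = (A.map (starRingEnd ℂ)) ⊗ₖ (C.map (starRingEnd ℂ)) := by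
    intro p q A C
    rw [Matrix.kroneckerMap_map, Matrix.kroneckerMap_map_left, Matrix.kroneckerMap_map_right]
    simp [Matrix.kroneckerMap, _root_.map_mul]
  rw [← Matrix.kroneckerMap_transpose, hc₁, hc₂, ← key]
  congr 1
  rw [Matrix.inv_kronecker, ← Matrix.kroneckerMap_transpose, ← Matrix.mul_kronecker_mul,
    ← Matrix.mul_kronecker_mul]
end

section
/- Let V be a nonzero finite-dimensional complex vector space, let P be a nondegenerate symmetric bilinear form on V, and let A be a bilinear form on a finite-dimensional complex vector space W. Suppose the bilinear form P⊗A on V ⊗ W, determined by (P⊗A)(u⊗x, v⊗y) = P(u,v)·A(x,y), is skew-symmetric and nondegenerate. Then A is skew-symmetric and nondegenerate, and the dimension of W is even. -/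
open TensorProduct Module Matrix

/-!
Pairing `u ⊗ x` with `v ⊗ y` for `u, v` with `P u v ≠ 0`, skewness of `P ⊗ A` together with
symmetry of `P` forces skewness of `A`. If `A x = 0` then `u ⊗ x` pairs trivially with
everything, so `u ⊗ x = 0` and `x = 0`. A nondegenerate skew form has an invertible Gram matrix
`M` with `Mᵀ = -M`, and `det M = (-1) ^ dim W * det M` forces `dim W` to be even.
-/

theorem Matrix.even_card_of_transpose_eq_neg {n R : Type*} [Fintype n] [DecidableEq n]
    [CommRing R] [NoZeroDivisors R] [NeZero (2 : R)] {M : Matrix n n R} (hM : Mᵀ = -M)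
    (hdet : M.det ≠ 0) : Even (Fintype.card n) := by
  by_contra hodd
  have hneg : M.det = -M.det := by
    conv_lhs => rw [← Matrix.det_transpose, hM, Matrix.det_neg,
      (Nat.not_even_iff_odd.mp hodd).neg_one_pow, neg_one_mul]
  have h2 : (2 : R) * M.det = 0 := by linear_combination hneg
  exact hdet ((mul_eq_zero.mp h2).resolve_left two_ne_zero)

theorem even_finrank_of_injective_of_skew {K W : Type*} [Field K] [NeZero (2 : K)]
    [AddCommGroup W] [Module K W] [FiniteDimensional K W] {A : W →ₗ[K] W →ₗ[K] K}
    (hskew : ∀ x y, A x y = -A y x) (hinj : Function.Injective A) :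
    Even (finrank K W) := by
  have hnd : LinearMap.BilinForm.Nondegenerate A :=
    LinearMap.BilinForm.nondegenerate_iff_ker_eq_bot.mpr (LinearMap.ker_eq_bot.mpr hinj)
  let b := finBasis K W
  have hM : (LinearMap.BilinForm.toMatrix b A)ᵀ = -LinearMap.BilinForm.toMatrix b A := by
    ext i j
    simp only [Matrix.transpose_apply, Matrix.neg_apply, LinearMap.BilinForm.toMatrix_apply,
      hskew (b j)]
  simpa using Matrix.even_card_of_transpose_eq_neg hM
    ((LinearMap.BilinForm.nondegenerate_iff_det_ne_zero b).mp hnd)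

theorem TensorProduct.eq_zero_of_tmul_eq_zero_of_ne_zero {K V W : Type*} [Field K]
    [AddCommGroup V] [Module K V] [AddCommGroup W] [Module K W] {u : V} {x : W}
    (hu : u ≠ 0) (h : u ⊗ₜ[K] x = 0) : x = 0 := by
  obtain ⟨φ, hφ⟩ := Projective.exists_dual_ne_zero K hu
  have hcontract : φ u • x = 0 := by
    rw [← TensorProduct.lid_tmul, ← LinearMap.rTensor_tmul, h, map_zero, map_zero]
  exact (smul_eq_zero.mp hcontract).resolve_left hφ

section TensorForm

variable {R K V W : Type*}

theorem skew_of_tensor_skew [CommRing R] [NoZeroDivisors R] [AddCommGroup V] [Module R V]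
    [AddCommGroup W] [Module R W] {P : V →ₗ[R] V →ₗ[R] R} {A : W →ₗ[R] W →ₗ[R] R}
    {B : V ⊗[R] W →ₗ[R] V ⊗[R] W →ₗ[R] R}
    (hB : ∀ u v x y, B (u ⊗ₜ x) (v ⊗ₜ y) = P u v * A x y) (hBskew : ∀ z w, B z w = -B w z)
    (hPsymm : ∀ u v, P u v = P v u) {u v : V} (huv : P u v ≠ 0) (x y : W) :
    A x y = -A y x := by
  have h : P u v * A x y = P u v * -A y x := by
    rw [← hB, hBskew, hB, hPsymm, mul_neg]
  exact mul_left_cancel₀ huv h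

theorem injective_of_tensor_injective [Field K] [AddCommGroup V] [Module K V] [Nontrivial V]
    [AddCommGroup W] [Module K W] {P : V →ₗ[K] V →ₗ[K] K} {A : W →ₗ[K] W →ₗ[K] K}
    {B : V ⊗[K] W →ₗ[K] V ⊗[K] W →ₗ[K] K}
    (hB : ∀ u v x y, B (u ⊗ₜ x) (v ⊗ₜ y) = P u v * A x y) (hBinj : Function.Injective B) :
    Function.Injective A := by
  obtain ⟨u, hu⟩ := exists_ne (0 : V)
  refine (injective_iff_map_eq_zero A).mpr fun x hx => ?_
  have hBux : B (u ⊗ₜ x) = 0 := TensorProduct.ext' fun v y => by simp [hB, hx]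
  exact TensorProduct.eq_zero_of_tmul_eq_zero_of_ne_zero hu (hBinj (hBux.trans (map_zero B).symm))

end TensorForm

/-- if `P` is a nondegenerate symmetric bilinear form on a nonzero
finite-dimensional complex vector space `V` and the tensor-product form `P ⊗ A`
on `V ⊗ W` is skew-symmetric and nondegenerate, then `A` is skew-symmetric and
nondegenerate and `dim W` is even. -/
theorem tensor_skew_of_symm_factor
    (V W : Type*) [AddCommGroup V] [Module ℂ V] [FiniteDimensional ℂ V] [Nontrivial V]
    [AddCommGroup W] [Module ℂ W] [FiniteDimensional ℂ W]
    (P : V →ₗ[ℂ] V →ₗ[ℂ] ℂ) (A : W →ₗ[ℂ] W →ₗ[ℂ] ℂ)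
    (hPsymm : ∀ u v : V, P u v = P v u)
    (hPnd : Function.Bijective P)
    (B : V ⊗[ℂ] W →ₗ[ℂ] V ⊗[ℂ] W →ₗ[ℂ] ℂ)
    (hB : ∀ (u v : V) (x y : W), B (u ⊗ₜ x) (v ⊗ₜ y) = P u v * A x y)
    (hBskew : ∀ z w : V ⊗[ℂ] W, B z w = - B w z)
    (hBnd : Function.Bijective B) :
    (∀ x y : W, A x y = - A y x) ∧ Function.Bijective A ∧
      Even (Module.finrank ℂ W) := by
  obtain ⟨u, v, huv⟩ : ∃ u v, P u v ≠ 0 := by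
    obtain ⟨u, hu⟩ := exists_ne (0 : V)
    obtain ⟨v, hv⟩ := DFunLike.ne_iff.mp ((map_ne_zero_iff P hPnd.injective).mpr hu)
    exact ⟨u, v, hv⟩
  have hAskew := skew_of_tensor_skew hB hBskew hPsymm huv
  have hAinj := injective_of_tensor_injective hB hBnd.injective
  have hAbij : Function.Bijective A :=
    ⟨hAinj, (LinearMap.injective_iff_surjective_of_finrank_eq_finrank
      (Subspace.dual_finrank_eq (K := ℂ) (V := W)).symm).mp hAinj⟩
  exact ⟨hAskew, hAbij, even_finrank_of_injective_of_skew hAskew hAinj⟩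
end

section
/- Let V be a nonzero finite-dimensional complex vector space, let P be a nondegenerate skew-symmetric bilinear form on V, and let A be a bilinear form on a finite-dimensional complex vector space W. Suppose the bilinear form P⊗A on V ⊗ W, determined by (P⊗A)(u⊗x, v⊗y) = P(u,v)·A(x,y), is skew-symmetric and nondegenerate. Then A is symmetric and nondegenerate. -/
open TensorProduct

/-- if `P` is a nondegenerate skew-symmetric bilinear form on a
nonzero finite-dimensional complex vector space `V` and the tensor-product form
`P ⊗ A` on `V ⊗ W` is skew-symmetric and nondegenerate, then `A` is symmetric and
nondegenerate. -/
theorem tensor_skew_of_skew_factor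
    (V W : Type*) [AddCommGroup V] [Module ℂ V] [FiniteDimensional ℂ V] [Nontrivial V]
    [AddCommGroup W] [Module ℂ W] [FiniteDimensional ℂ W]
    (P : V →ₗ[ℂ] V →ₗ[ℂ] ℂ) (A : W →ₗ[ℂ] W →ₗ[ℂ] ℂ)
    (hPskew : ∀ u v : V, P u v = - P v u)
    (hPnd : Function.Bijective P)
    (B : V ⊗[ℂ] W →ₗ[ℂ] V ⊗[ℂ] W →ₗ[ℂ] ℂ)
    (hB : ∀ (u v : V) (x y : W), B (u ⊗ₜ x) (v ⊗ₜ y) = P u v * A x y)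
    (hBskew : ∀ z w : V ⊗[ℂ] W, B z w = - B w z)
    (hBnd : Function.Bijective B) :
    (∀ x y : W, A x y = A y x) ∧ Function.Bijective A := by
  -- find u₀, v₀ with P u₀ v₀ ≠ 0
  obtain ⟨u₀, hu₀⟩ := exists_ne (0 : V)
  have hPu : P u₀ ≠ 0 := by
    intro h
    exact hu₀ (hPnd.injective (by simpa using h))
  obtain ⟨v₀, hv₀⟩ : ∃ v, P u₀ v ≠ 0 := by
    by_contra h
    push_neg at h
    exact hPu (LinearMap.ext fun v => h v)
  -- symmetry
  have hsymm : ∀ x y : W, A x y = A y x := by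
    intro x y
    have h1 : B (u₀ ⊗ₜ x) (v₀ ⊗ₜ y) = - B (v₀ ⊗ₜ y) (u₀ ⊗ₜ x) := hBskew _ _
    rw [hB, hB, hPskew v₀ u₀] at h1
    have : P u₀ v₀ * A x y = P u₀ v₀ * A y x := by ring_nf at h1 ⊢; exact h1
    exact mul_left_cancel₀ hv₀ this
  refine ⟨hsymm, ?_⟩
  -- injectivity of A suffices
  have hAinj : Function.Injective A := by
    rw [← LinearMap.ker_eq_bot, LinearMap.ker_eq_bot']
    intro x hx
    -- B (u₀ ⊗ x) = 0
    have hz : ∀ z : V ⊗[ℂ] W, B (u₀ ⊗ₜ x) z = 0 := by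
      intro z
      induction z using TensorProduct.induction_on with
      | zero => simp
      | tmul v y => rw [hB]; simp [hx]
      | add z w hz hw => simp [hz, hw]
    have h0 : u₀ ⊗ₜ[ℂ] x = (0 : V ⊗[ℂ] W) := by
      apply hBnd.injective
      ext z
      simp [hz]
    -- extract x from u₀ ⊗ x using a dual functional
    by_contra hxne
    obtain ⟨φ, hφ⟩ : ∃ φ : Module.Dual ℂ V, φ u₀ ≠ 0 := by
      by_contra h
      push_neg at h
      exact hu₀ ((Module.forall_dual_apply_eq_zero_iff ℂ u₀).mp h)
    have := congrArg (TensorProduct.lift ((LinearMap.lsmul ℂ W).comp φ)) h0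
    simp only [TensorProduct.lift.tmul, map_zero, LinearMap.comp_apply,
      LinearMap.lsmul_apply] at this
    exact hxne (by simpa [smul_eq_zero, hφ] using this)
  exact ⟨hAinj, (LinearMap.injective_iff_surjective_of_finrank_eq_finrank
    (Subspace.dual_finrank_eq (V := W)).symm).mp hAinj⟩
end
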